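/- arXiv:1204.4525 — 3 statements merged into one kernel-verified Lean document; each statement's English description precedes it below -/
import Mathlib

section
/- Suppose I : Y → [0,∞] has compact level sets and the Laplace principle holds: for all bounded continuous Φ : Y → ℝ, ε log E^G(exp(Φ(Z^ε)/ε)) → sup_{y∈Y}(Φ(y) − I(y)) as ε → 0, where E^G is a sublinear expectation with associated capacity c^G(A) = sup_{P} P(A). Then for every open set O ⊆ Y, liminf_{ε→0} ε log c^G(Z^ε ∈ O) ≥ − inf_{y∈O} I(y). -/
/-!
Fix `y₀ ∈ O` with `I y₀ < ∞`, a ball `B(y₀, δ) ⊆ O` and `M = I y₀ + 1`. The bounded continuous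
penalty `Φ = -M · min (d(·, y₀) / δ, 1)` vanishes at `y₀` and equals `-M` off `O`, so
`exp (Φ(Z^ε) / ε) ≤ 1{Z^ε ∈ O} + exp (-M / ε)`, and integrating under each `P` gives
`E^G[exp (Φ(Z^ε) / ε)] ≤ c^G(Z^ε ∈ O) + exp (-M / ε) ≤ 2 max (c^G(Z^ε ∈ O), exp (-M / ε))`.
Taking `ε log` and letting `ε → 0`, the Laplace principle yields
`-I y₀ ≤ sup (Φ - I) ≤ max (liminf ε log c^G(Z^ε ∈ O), -M)`, and `-M < -I y₀` rules out the
second term.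
-/

open MeasureTheory Filter Topology
open scoped ENNReal

lemma Filter.liminf_max_const {ι β : Type*} [CompleteLinearOrder β] [TopologicalSpace β]
    [OrderTopology β] {F : Filter ι} [F.NeBot] (f : ι → β) (c : β) :
    liminf (fun x => max (f x) c) F = max (liminf f F) c :=
  ((monotone_id.max monotone_const).map_liminf_of_continuousAt f
    (continuous_id.max continuous_const).continuousAt).symm

lemma EReal.le_liminf_of_tendsto_of_le_add {ι : Type*} {F : Filter ι} [F.NeBot]
    {u r v : ι → ℝ} {S : EReal} (hu : Tendsto (fun x => (u x : EReal)) F (𝓝 S))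
    (hr : Tendsto r F (𝓝 0)) (huv : ∀ᶠ x in F, u x ≤ r x + v x) :
    S ≤ liminf (fun x => (v x : EReal)) F := by
  have hsub : Tendsto (fun x => ((u x - r x : ℝ) : EReal)) F (𝓝 S) := by
    have hneg : Tendsto (fun x => ((-r x : ℝ) : EReal)) F (𝓝 0) :=
      EReal.tendsto_coe.2 (by simpa using hr.neg)
    have hadd := (EReal.continuousAt_add (p := (S, 0)) (Or.inr (by simp))
      (Or.inr (by simp))).tendsto.comp (hu.prodMk_nhds hneg)
    simpa [Function.comp_def, sub_eq_add_neg] using hadd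
  rw [← hsub.liminf_eq]
  exact liminf_le_liminf (huv.mono fun x hx => EReal.coe_le_coe_iff.2 (by linarith))

lemma Real.mul_log_le_mul_log_two_add_max {ε x a b : ℝ} (hε : 0 ≤ ε) (hx : 0 < x)
    (hab : x ≤ a + b) :
    ε * Real.log x ≤ ε * Real.log 2 + max (ε * Real.log a) (ε * Real.log b) := by
  have hlog : Real.log x ≤ Real.log 2 + max (Real.log a) (Real.log b) := by
    rcases le_total a b with h | h
    · calc Real.log x ≤ Real.log (2 * b) := Real.log_le_log hx (by linarith)
        _ = Real.log 2 + Real.log b := Real.log_mul two_ne_zero (by linarith)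
        _ ≤ _ := by gcongr; exact le_max_right _ _
    · calc Real.log x ≤ Real.log (2 * a) := Real.log_le_log hx (by linarith)
        _ = Real.log 2 + Real.log a := Real.log_mul two_ne_zero (by linarith)
        _ ≤ _ := by gcongr; exact le_max_left _ _
  rw [← mul_max_of_nonneg _ _ hε, ← mul_add]
  exact mul_le_mul_of_nonneg_left hlog hε

section UpperExpectation

variable {Ω : Type*} [MeasurableSpace Ω] {Ps : Set (Measure Ω)}

noncomputable def upperExpectation (Ps : Set (Measure Ω)) (X : Ω → ℝ) : ℝ :=
  sSup ((fun P : Measure Ω => ∫ ω, X ω ∂P) '' Ps)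

noncomputable def upperProbability (Ps : Set (Measure Ω)) (A : Set Ω) : ℝ :=
  sSup ((fun P : Measure Ω => (P A).toReal) '' Ps)

lemma measureReal_le_upperProbability (hprob : ∀ P ∈ Ps, IsProbabilityMeasure P)
    {P : Measure Ω} (hP : P ∈ Ps) (A : Set Ω) : (P A).toReal ≤ upperProbability Ps A := by
  refine le_csSup ⟨1, ?_⟩ ⟨P, hP, rfl⟩
  rintro _ ⟨Q, hQ, rfl⟩
  have := hprob Q hQ
  exact measureReal_le_one

lemma upperExpectation_le_upperProbability_add (hprob : ∀ P ∈ Ps, IsProbabilityMeasure P)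
    {X : Ω → ℝ} {A : Set Ω} (hA : MeasurableSet A) {b : ℝ} (hb : 0 ≤ b)
    (hX : ∀ ω, 0 ≤ X ω) (hXA : ∀ ω, X ω ≤ A.indicator 1 ω + b) :
    upperExpectation Ps X ≤ upperProbability Ps A + b := by
  have hcap : 0 ≤ upperProbability Ps A :=
    Real.sSup_nonneg (by rintro _ ⟨P, -, rfl⟩; positivity)
  refine Real.sSup_le ?_ (by positivity)
  rintro _ ⟨P, hP, rfl⟩
  have := hprob P hP
  have hind : Integrable (A.indicator (1 : Ω → ℝ)) P := (integrable_const 1).indicator hA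
  calc ∫ ω, X ω ∂P ≤ ∫ ω, (A.indicator 1 ω + b) ∂P :=
        integral_mono_of_nonneg (.of_forall hX) (hind.add (integrable_const b)) (.of_forall hXA)
    _ = (P A).toReal + b := by
        rw [integral_add hind (integrable_const b), integral_indicator_one hA]
        simp [measureReal_def]
    _ ≤ upperProbability Ps A + b := by
        gcongr; exact measureReal_le_upperProbability hprob hP A

lemma upperExpectation_pos (hne : Ps.Nonempty) (hprob : ∀ P ∈ Ps, IsProbabilityMeasure P)
    {X : Ω → ℝ} (hXm : Measurable X) {b C : ℝ} (hb : 0 < b) (hbX : ∀ ω, b ≤ X ω)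
    (hXC : ∀ ω, X ω ≤ C) : 0 < upperExpectation Ps X := by
  have hint : ∀ P ∈ Ps, Integrable X P := fun P hP => by
    have := hprob P hP
    refine .of_bound hXm.aestronglyMeasurable C (.of_forall fun ω => ?_)
    rw [Real.norm_eq_abs, abs_of_pos (hb.trans_le (hbX ω))]
    exact hXC ω
  have hbdd : BddAbove ((fun P : Measure Ω => ∫ ω, X ω ∂P) '' Ps) := by
    refine ⟨C, ?_⟩
    rintro _ ⟨P, hP, rfl⟩
    have := hprob P hP
    simpa using integral_mono (hint P hP) (integrable_const C) hXC
  obtain ⟨P, hP⟩ := hne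
  have := hprob P hP
  calc 0 < b := hb
    _ ≤ ∫ ω, X ω ∂P := by simpa using integral_mono (integrable_const b) (hint P hP) hbX
    _ ≤ upperExpectation Ps X := le_csSup hbdd ⟨P, hP, rfl⟩

end UpperExpectation

section BallPenalty

variable {Y : Type*} [PseudoMetricSpace Y] {y₀ : Y} {δ M : ℝ}

noncomputable def ballPenalty (y₀ : Y) (δ M : ℝ) (y : Y) : ℝ :=
  -(M * min (dist y y₀ / δ) 1)

lemma continuous_ballPenalty (y₀ : Y) (δ M : ℝ) : Continuous (ballPenalty y₀ δ M) := by
  unfold ballPenalty; fun_prop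

@[simp]
lemma ballPenalty_self : ballPenalty y₀ δ M y₀ = 0 := by
  simp [ballPenalty]

lemma ballPenalty_nonpos (hδ : 0 ≤ δ) (hM : 0 ≤ M) (y : Y) : ballPenalty y₀ δ M y ≤ 0 := by
  have : 0 ≤ min (dist y y₀ / δ) 1 := le_min (by positivity) zero_le_one
  simp only [ballPenalty, neg_nonpos]
  positivity

lemma neg_le_ballPenalty (hM : 0 ≤ M) (y : Y) : -M ≤ ballPenalty y₀ δ M y :=
  neg_le_neg (mul_le_of_le_one_right hM (min_le_right _ _))

lemma ballPenalty_of_notMem_ball (hδ : 0 < δ) {y : Y} (hy : y ∉ Metric.ball y₀ δ) :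
    ballPenalty y₀ δ M y = -M := by
  rw [Metric.mem_ball, not_lt] at hy
  simp [ballPenalty, min_eq_right ((one_le_div hδ).2 hy)]

lemma exp_ballPenalty_div_le (hδ : 0 < δ) (hM : 0 ≤ M) {ε : ℝ} (hε : 0 < ε) {O : Set Y}
    (hball : Metric.ball y₀ δ ⊆ O) (y : Y) :
    Real.exp (ballPenalty y₀ δ M y / ε) ≤ O.indicator 1 y + Real.exp (-M / ε) := by
  by_cases hy : y ∈ O
  · have : Real.exp (ballPenalty y₀ δ M y / ε) ≤ 1 :=
      Real.exp_le_one_iff.2 (div_nonpos_of_nonpos_of_nonneg (ballPenalty_nonpos hδ.le hM y) hε.le)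
    simp only [Set.indicator_of_mem hy, Pi.one_apply]
    linarith [Real.exp_pos (-M / ε)]
  · rw [ballPenalty_of_notMem_ball hδ (fun h => hy (hball h)), Set.indicator_of_notMem hy,
      zero_add]

end BallPenalty

section LowerBound

variable {Ω Y : Type*} [MeasurableSpace Ω] [PseudoMetricSpace Y] [MeasurableSpace Y]
  [OpensMeasurableSpace Y] {Ps : Set (Measure Ω)}

lemma mul_log_upperExpectation_exp_ballPenalty_le (hne : Ps.Nonempty)
    (hprob : ∀ P ∈ Ps, IsProbabilityMeasure P) {Z : Ω → Y} (hZ : Measurable Z) {O : Set Y}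
    (hO : MeasurableSet O) {y₀ : Y} {δ M ε : ℝ} (hδ : 0 < δ) (hM : 0 ≤ M) (hε : 0 < ε)
    (hball : Metric.ball y₀ δ ⊆ O) :
    ε * Real.log (upperExpectation Ps fun ω => Real.exp (ballPenalty y₀ δ M (Z ω) / ε)) ≤
      ε * Real.log 2 + max (ε * Real.log (upperProbability Ps (Z ⁻¹' O))) (-M) := by
  have hXm : Measurable fun ω => Real.exp (ballPenalty y₀ δ M (Z ω) / ε) :=
    (((continuous_ballPenalty y₀ δ M).measurable.comp hZ).div_const ε).exp
  have hpos := upperExpectation_pos hne hprob hXm (Real.exp_pos (-M / ε))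
    (fun ω => Real.exp_le_exp.2 (div_le_div_of_nonneg_right (neg_le_ballPenalty hM _) hε.le))
    (fun ω => Real.exp_le_one_iff.2
      (div_nonpos_of_nonpos_of_nonneg (ballPenalty_nonpos hδ.le hM _) hε.le))
  have hle := upperExpectation_le_upperProbability_add hprob (hZ hO) (Real.exp_pos _).le
    (fun ω => (Real.exp_pos _).le)
    (fun ω => by
      have := exp_ballPenalty_div_le hδ hM hε hball (Z ω)
      rwa [← Set.indicator_comp_right, Pi.one_comp] at this)
  have := Real.mul_log_le_mul_log_two_add_max hε.le hpos hle
  rwa [Real.log_exp, mul_div_cancel₀ _ hε.ne'] at this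

lemma neg_le_liminf_mul_log_upperProbability (hne : Ps.Nonempty)
    (hprob : ∀ P ∈ Ps, IsProbabilityMeasure P) {Z : ℝ → Ω → Y} (hZ : ∀ ε, Measurable (Z ε))
    {I : Y → ℝ≥0∞}
    (hLaplace : ∀ Φ : Y → ℝ, Continuous Φ → (∃ M, ∀ y, |Φ y| ≤ M) →
      Tendsto
        (fun ε : ℝ =>
          ((ε * Real.log (upperExpectation Ps fun ω => Real.exp (Φ (Z ε ω) / ε)) : ℝ) : EReal))
        (𝓝[>] 0) (𝓝 (⨆ y : Y, ((Φ y : EReal) - (I y : EReal)))))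
    {O : Set Y} (hO : IsOpen O) {y₀ : Y} (hy₀ : y₀ ∈ O) (hI : I y₀ ≠ ⊤) :
    -(I y₀ : EReal) ≤
      liminf (fun ε : ℝ => ((ε * Real.log (upperProbability Ps (Z ε ⁻¹' O)) : ℝ) : EReal))
        (𝓝[>] 0) := by
  obtain ⟨δ, hδ, hball⟩ := Metric.isOpen_iff.1 hO y₀ hy₀
  set M := (I y₀).toReal + 1
  have hM : 0 ≤ M := by positivity
  set Φ := ballPenalty y₀ δ M
  have hΦ : ∀ y, |Φ y| ≤ M := fun y =>
    abs_le.2 ⟨neg_le_ballPenalty hM y, (ballPenalty_nonpos hδ.le hM y).trans hM⟩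
  have hlog2 : Tendsto (fun ε : ℝ => ε * Real.log 2) (𝓝[>] 0) (𝓝 0) := by
    simpa using (tendsto_id.mul_const (Real.log 2)).mono_left (nhdsWithin_le_nhds (a := (0 : ℝ)))
  have hlower : -(I y₀ : EReal) ≤ ⨆ y : Y, ((Φ y : EReal) - (I y : EReal)) :=
    le_iSup_of_le y₀ (by simp [Φ])
  have hupper := EReal.le_liminf_of_tendsto_of_le_add
    (hLaplace Φ (continuous_ballPenalty y₀ δ M) ⟨M, hΦ⟩) hlog2
    (eventually_mem_nhdsWithin.mono fun ε hε =>
      mul_log_upperExpectation_exp_ballPenalty_le hne hprob (hZ ε) hO.measurableSet hδ hM hε hball)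
  simp only [EReal.coe_strictMono.monotone.map_max, Filter.liminf_max_const] at hupper
  have hM_lt : ((-M : ℝ) : EReal) < -(I y₀ : EReal) := by
    rw [← EReal.coe_ennreal_toReal hI, ← EReal.coe_neg, EReal.coe_lt_coe_iff]
    linarith
  exact (le_max_iff.1 (hlower.trans hupper)).resolve_right hM_lt.not_ge

end LowerBound

theorem stmt_8_general {Ω Y : Type*} [MeasurableSpace Ω]
    [MetricSpace Y]
    [MeasurableSpace Y] [BorelSpace Y]
    (Ps : Set (Measure Ω)) (hne : Ps.Nonempty)
    (hprob : ∀ P ∈ Ps, IsProbabilityMeasure P)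
    (EG : (Ω → ℝ) → ℝ)
    (hEG : ∀ X, EG X = sSup ((fun P : Measure Ω => ∫ ω, X ω ∂P) '' Ps))
    (cap : Set Ω → ℝ)
    (hcap : ∀ A, cap A = sSup ((fun P : Measure Ω => (P A).toReal) '' Ps))
    (Z : ℝ → Ω → Y) (hZ : ∀ ε, Measurable (Z ε))
    (I : Y → ℝ≥0∞)
    (hLaplace : ∀ Φ : Y → ℝ, Continuous Φ → (∃ M, ∀ y, |Φ y| ≤ M) →
      Tendsto
        (fun ε : ℝ =>
          ((ε * Real.log (EG (fun ω => Real.exp (Φ (Z ε ω) / ε)))) : EReal))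
        (𝓝[>] (0 : ℝ))
        (𝓝 (⨆ y : Y, ((Φ y : EReal) - ((I y : ℝ≥0∞) : EReal))))) :
    ∀ O : Set Y, IsOpen O →
      -(⨅ y ∈ O, ((I y : ℝ≥0∞) : EReal)) ≤
        liminf (fun ε : ℝ => ((ε * Real.log (cap ((Z ε) ⁻¹' O))) : EReal))
          (𝓝[>] (0 : ℝ)) := by
  obtain rfl : EG = upperExpectation Ps := funext hEG
  obtain rfl : cap = upperProbability Ps := funext hcap
  intro O hO
  rw [EReal.neg_le]
  refine le_iInf₂ fun y hy => ?_
  rw [EReal.neg_le]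
  by_cases hI : I y = ⊤
  · simp [hI]
  · exact neg_le_liminf_mul_log_upperProbability hne hprob hZ hLaplace hO hy hI

theorem stmt_8 {Ω Y : Type*} [MeasurableSpace Ω]
    [MetricSpace Y] [CompleteSpace Y] [TopologicalSpace.SeparableSpace Y]
    [MeasurableSpace Y] [BorelSpace Y]
    (Ps : Set (Measure Ω)) (hne : Ps.Nonempty)
    (hprob : ∀ P ∈ Ps, IsProbabilityMeasure P)
    (EG : (Ω → ℝ) → ℝ)
    (hEG : ∀ X, EG X = sSup ((fun P : Measure Ω => ∫ ω, X ω ∂P) '' Ps))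
    (cap : Set Ω → ℝ)
    (hcap : ∀ A, cap A = sSup ((fun P : Measure Ω => (P A).toReal) '' Ps))
    (Z : ℝ → Ω → Y) (hZ : ∀ ε, Measurable (Z ε))
    (I : Y → ℝ≥0∞)
    (hcompact : ∀ L : ℝ≥0∞, L ≠ ⊤ → IsCompact {y : Y | I y ≤ L})
    (hLaplace : ∀ Φ : Y → ℝ, Continuous Φ → (∃ M, ∀ y, |Φ y| ≤ M) →
      Tendsto
        (fun ε : ℝ =>
          ((ε * Real.log (EG (fun ω => Real.exp (Φ (Z ε ω) / ε)))) : EReal))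
        (𝓝[>] (0 : ℝ))
        (𝓝 (⨆ y : Y, ((Φ y : EReal) - ((I y : ℝ≥0∞) : EReal))))) :
    ∀ O : Set Y, IsOpen O →
      -(⨅ y ∈ O, ((I y : ℝ≥0∞) : EReal)) ≤
        liminf (fun ε : ℝ => ((ε * Real.log (cap ((Z ε) ⁻¹' O))) : EReal))
          (𝓝[>] (0 : ℝ)) :=
  stmt_8_general Ps hne hprob EG hEG cap hcap Z hZ I hLaplace
end

section
/- Under the Lipschitz assumptions above, for every m ≥ 1 and l > 0, sup over ‖f‖_H ≤ l, g ∈ 𝔸, |x| ≤ m, t ∈ [0,T] of |Ψ(f,g)(x,t)| is finite; moreover sup over the same set of |Ψ(f,g)(x, π_N(t)) − Ψ(f,g)(x,t)| ≤ C/√N for a constant C depending only on m, l, T, overline{σ} and the Lipschitz data, where π_N(t) = (k−1)T/N for t ∈ [(k−1)T/N, kT/N). -/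
open MeasureTheory intervalIntegral

/-- `X` solves the controlled ODE on `[0,T]` with continuous paths. -/
def SolvesCtrlODE (p d : ℕ) (T : ℝ)
    (b : (Fin p → ℝ) → (Fin p → ℝ))
    (σ : (Fin p → ℝ) → Matrix (Fin p) (Fin d) ℝ)
    (h : (Fin p → ℝ) → Fin p → Matrix (Fin d) (Fin d) ℝ)
    (f' : ℝ → (Fin d → ℝ)) (g' : ℝ → Matrix (Fin d) (Fin d) ℝ)
    (X : (Fin p → ℝ) → ℝ → (Fin p → ℝ)) : Prop :=
  (∀ x, ContinuousOn (X x) (Set.Icc 0 T)) ∧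
  ∀ x, ∀ t ∈ Set.Icc (0 : ℝ) T,
    X x t = x + ∫ s in (0 : ℝ)..t,
      (b (X x s) + (σ (X x s)).mulVec (f' s)
        + fun k => ∑ i, ∑ j, h (X x s) k i j * g' s i j)

/-- The dyadic-type projection `π_N(t) = (k-1)T/N` for `t ∈ [(k-1)T/N, kT/N)`. -/
noncomputable def piN (T : ℝ) (N : ℕ) (t : ℝ) : ℝ := (⌊t * N / T⌋ : ℝ) * T / N

/-!
Along a solution with `‖X‖ ≤ M` on `[r, t]`, the Lipschitz bounds give the linear growth
`‖b + σ f' + h g'‖ ≤ (K + L M) (1 + d² σ̄ + d ‖f'‖)`, where `K` bounds the coefficients at the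
origin, and Cauchy–Schwarz turns `∫_r^t ‖f'‖` into `l √(t - r)`; hence `X` moves by at most
`(K + L M) ρ(t - r)` with `ρ δ = (1 + d² σ̄) δ + d l √δ`.
On windows of length `η` with `L ρ(η) ≤ 1/2`, half of the running maximum is absorbed, so the
maximum at most doubles (up to a constant) per window, and `⌈T / η⌉` windows give a uniform
bound `B`. With `M = B`, `t - π_N(t) ≤ T / N` and `ρ(T / N) ≤ ρ(T) / √N` give the modulus.
-/

open Set Filter Topology

theorem integral_le_mul_sqrt_of_integral_sq_le {u : ℝ → ℝ} {r t l : ℝ} (hrt : r ≤ t)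
    (hl : 0 < l) (hu : IntervalIntegrable u volume r t)
    (hu2 : IntervalIntegrable (fun s => u s ^ 2) volume r t)
    (hI : ∫ s in r..t, u s ^ 2 ≤ l ^ 2) : ∫ s in r..t, u s ≤ l * √(t - r) := by
  rcases hrt.eq_or_lt with rfl | hlt
  · simp
  have hδ : 0 < √(t - r) := Real.sqrt_pos.2 (sub_pos.2 hlt)
  set ε := l / √(t - r)
  have hε : 0 < ε := div_pos hl hδ
  -- AM-GM, with `ε` chosen so that both terms integrate to `l √(t - r) / 2`
  have hamgm : ∀ s, u s ≤ (ε + u s ^ 2 / ε) / 2 := fun s => by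
    have : (ε + u s ^ 2 / ε) / 2 - u s = (u s - ε) ^ 2 / (2 * ε) := by field_simp; ring
    linarith [div_nonneg (sq_nonneg (u s - ε)) (by positivity : (0 : ℝ) ≤ 2 * ε)]
  calc ∫ s in r..t, u s ≤ ∫ s in r..t, (ε + u s ^ 2 / ε) / 2 :=
        integral_mono_on hrt hu ((intervalIntegrable_const.add (hu2.div_const ε)).div_const 2)
          fun s _ => hamgm s
    _ = ((t - r) * ε + (∫ s in r..t, u s ^ 2) / ε) / 2 := by
        rw [intervalIntegral.integral_div 2,
          integral_add intervalIntegrable_const (hu2.div_const ε), intervalIntegral.integral_div ε,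
          intervalIntegral.integral_const, smul_eq_mul]
    _ ≤ ((t - r) * ε + l ^ 2 / ε) / 2 := by gcongr
    _ = l * √(t - r) := by
        have hsq := Real.sq_sqrt (sub_nonneg.2 hrt)
        simp only [ε]
        field_simp
        rw [hsq]
        ring

theorem ContinuousOn.le_four_pow_mul_of_local_doubling {φ : ℝ → ℝ} {T η A D : ℝ}
    (hφ : ContinuousOn φ (Icc 0 T)) (hη : 0 < η) (hD : 0 ≤ D) (hφ0 : φ 0 ≤ D) (hAD : A ≤ D)
    (hstep : ∀ r t, 0 ≤ r → r ≤ t → t ≤ T → t - r ≤ η → (∀ s ∈ Icc r t, φ s ≤ φ t) →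
      φ t ≤ 2 * (φ r + A)) :
    ∀ t ∈ Icc 0 T, φ t ≤ 4 ^ ⌈T / η⌉₊ * D := by
  suffices H : ∀ n : ℕ, ∀ t ∈ Icc 0 T, t ≤ n * η → φ t ≤ 4 ^ n * D from
    fun t ht => H _ t ht (ht.2.trans ((div_le_iff₀ hη).1 (Nat.le_ceil _)))
  intro n
  induction n with
  | zero =>
    intro t ht ht0
    obtain rfl : t = 0 := le_antisymm (by simpa using ht0) ht.1
    simpa using hφ0
  | succ n ih =>
    intro t ht htn
    have h4n : (1 : ℝ) ≤ 4 ^ n := one_le_pow₀ (by norm_num)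
    rcases le_total t (n * η) with hle | hlt
    · calc φ t ≤ 4 ^ n * D := ih t ht hle
        _ ≤ 4 ^ (n + 1) * D := by rw [pow_succ]; nlinarith
    have hr : n * η ∈ Icc 0 T := ⟨by positivity, hlt.trans ht.2⟩
    obtain ⟨τ, hτ, hτmax⟩ := isCompact_Icc.exists_isMaxOn (nonempty_Icc.2 hlt)
      (hφ.mono (Icc_subset_Icc hr.1 ht.2))
    have hτ_le : φ τ ≤ 2 * (φ (n * η) + A) :=
      hstep _ τ hr.1 hτ.1 (hτ.2.trans ht.2) (by push_cast at htn; linarith [hτ.2])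
        fun s hs => hτmax ⟨hs.1, hs.2.trans hτ.2⟩
    calc φ t ≤ φ τ := hτmax ⟨hlt, le_rfl⟩
      _ ≤ 2 * (4 ^ n * D + D) := by linarith [ih _ hr le_rfl]
      _ ≤ 4 ^ (n + 1) * D := by rw [pow_succ]; nlinarith

noncomputable def sqrtModulus (α β δ : ℝ) : ℝ := α * δ + β * √δ

section sqrtModulus

variable {α β δ δ' : ℝ}

theorem sqrtModulus_mono (hα : 0 ≤ α) (hβ : 0 ≤ β) (h : δ ≤ δ') :
    sqrtModulus α β δ ≤ sqrtModulus α β δ' := by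
  unfold sqrtModulus; gcongr

theorem exists_pos_mul_sqrtModulus_le (L α β : ℝ) : ∃ η > 0, L * sqrtModulus α β η ≤ 1 / 2 := by
  have hcont : Tendsto (fun δ => L * sqrtModulus α β δ) (𝓝[>] 0) (𝓝 0) := by
    have : Continuous fun δ => L * sqrtModulus α β δ := by unfold sqrtModulus; fun_prop
    simpa [sqrtModulus] using (this.tendsto 0).mono_left nhdsWithin_le_nhds
  obtain ⟨η, hη, hle⟩ := ((hcont.eventually (gt_mem_nhds (by norm_num : (0:ℝ) < 1 / 2))).and
    self_mem_nhdsWithin).exists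
  exact ⟨η, hle, hη.le⟩

theorem sqrtModulus_div_le (hα : 0 ≤ α) (hδ : 0 ≤ δ) {N : ℝ} (hN : 1 ≤ N) :
    sqrtModulus α β (δ / N) ≤ sqrtModulus α β δ / √N := by
  have hNsN : √N ≤ N := by nlinarith [Real.sq_sqrt (zero_le_one.trans hN)]
  unfold sqrtModulus
  rw [Real.sqrt_div' _ (zero_le_one.trans hN), add_div, mul_div_assoc, mul_div_assoc]
  gcongr

end sqrtModulus

theorem piN_eq_sub_fract {T t : ℝ} {N : ℕ} (hT : T ≠ 0) (hN : N ≠ 0) :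
    piN T N t = t - Int.fract (t * N / T) * (T / N) := by
  unfold piN
  rw [← Int.self_sub_floor]
  field_simp
  ring

theorem piN_nonneg {T t : ℝ} {N : ℕ} (hT : 0 ≤ T) (ht : 0 ≤ t) : 0 ≤ piN T N t := by
  unfold piN
  have : (0 : ℝ) ≤ ⌊t * N / T⌋ := by exact_mod_cast Int.floor_nonneg.2 (by positivity)
  positivity

theorem piN_le {T t : ℝ} {N : ℕ} (hT : 0 < T) (hN : N ≠ 0) : piN T N t ≤ t := by
  rw [piN_eq_sub_fract hT.ne' hN]
  exact sub_le_self _ (mul_nonneg (Int.fract_nonneg _) (by positivity))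

theorem sub_piN_le {T t : ℝ} {N : ℕ} (hT : 0 < T) (hN : N ≠ 0) : t - piN T N t ≤ T / N := by
  rw [piN_eq_sub_fract hT.ne' hN, sub_sub_cancel]
  exact mul_le_of_le_one_left (by positivity) (Int.fract_lt_one _).le

theorem norm_le_add_mul_of_norm_sub_le {E F : Type*} [SeminormedAddCommGroup E]
    [SeminormedAddCommGroup F] {φ : E → F} {L K M : ℝ} {y : E} (hL : 0 ≤ L)
    (hφ : ‖φ y - φ 0‖ ≤ L * ‖y - 0‖) (h0 : ‖φ 0‖ ≤ K) (hy : ‖y‖ ≤ M) : ‖φ y‖ ≤ K + L * M :=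
  calc ‖φ y‖ ≤ ‖φ 0‖ + ‖φ y - φ 0‖ := norm_le_norm_add_norm_sub' _ _
    _ ≤ K + L * M := add_le_add h0 (hφ.trans (by rw [sub_zero]; gcongr))

theorem abs_sum_mul_le_card_mul {ι : Type*} [Fintype ι] {a x : ι → ℝ} {C D : ℝ} (hC : 0 ≤ C)
    (ha : ∀ i, |a i| ≤ C) (hx : ∀ i, |x i| ≤ D) :
    |∑ i, a i * x i| ≤ Fintype.card ι * (C * D) :=
  calc |∑ i, a i * x i| ≤ ∑ i, |a i * x i| := Finset.abs_sum_le_sum_abs _ _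
    _ ≤ ∑ _i : ι, C * D := Finset.sum_le_sum fun i _ => by
        rw [abs_mul]; exact mul_le_mul (ha i) (hx i) (abs_nonneg _) hC
    _ = Fintype.card ι * (C * D) := by simp

section ControlledODE

variable {p d : ℕ} {b : (Fin p → ℝ) → (Fin p → ℝ)} {σ : (Fin p → ℝ) → Matrix (Fin p) (Fin d) ℝ}
  {h : (Fin p → ℝ) → Fin p → Matrix (Fin d) (Fin d) ℝ}

def ctrlField (b : (Fin p → ℝ) → (Fin p → ℝ)) (σ : (Fin p → ℝ) → Matrix (Fin p) (Fin d) ℝ)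
    (h : (Fin p → ℝ) → Fin p → Matrix (Fin d) (Fin d) ℝ) (y : Fin p → ℝ) (v : Fin d → ℝ)
    (A : Matrix (Fin d) (Fin d) ℝ) : Fin p → ℝ :=
  b y + (σ y).mulVec v + fun k => ∑ i, ∑ j, h y k i j * A i j

theorem ctrlField_apply (y : Fin p → ℝ) (v : Fin d → ℝ) (A : Matrix (Fin d) (Fin d) ℝ)
    (k : Fin p) :
    ctrlField b σ h y v A k = b y k + ∑ i, σ y k i * v i + ∑ i, ∑ j, h y k i j * A i j := by
  simp [ctrlField, Matrix.mulVec, dotProduct]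

structure LipschitzCoeffs (L K : ℝ) (b : (Fin p → ℝ) → (Fin p → ℝ))
    (σ : (Fin p → ℝ) → Matrix (Fin p) (Fin d) ℝ)
    (h : (Fin p → ℝ) → Fin p → Matrix (Fin d) (Fin d) ℝ) : Prop where
  nonneg : 0 ≤ L
  lipschitz_b : ∀ x y, ‖b x - b y‖ ≤ L * ‖x - y‖
  lipschitz_σ : ∀ x y, ∀ k i, |σ x k i - σ y k i| ≤ L * ‖x - y‖
  lipschitz_h : ∀ x y, ∀ k i j, |h x k i j - h y k i j| ≤ L * ‖x - y‖
  norm_b_zero_le : ‖b 0‖ ≤ K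
  abs_σ_zero_le : ∀ k i, |σ 0 k i| ≤ K
  abs_h_zero_le : ∀ k i j, |h 0 k i j| ≤ K

theorem exists_lipschitzCoeffs {L : ℝ} (hL : 0 ≤ L) (hb : ∀ x y, ‖b x - b y‖ ≤ L * ‖x - y‖)
    (hσ : ∀ x y, ∀ k i, |σ x k i - σ y k i| ≤ L * ‖x - y‖)
    (hh : ∀ x y, ∀ k i j, |h x k i j - h y k i j| ≤ L * ‖x - y‖) :
    ∃ K, LipschitzCoeffs L K b σ h := by
  obtain ⟨Kσ, hKσ⟩ := Finite.exists_le fun q : Fin p × Fin d => |σ 0 q.1 q.2|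
  obtain ⟨Kh, hKh⟩ := Finite.exists_le fun q : Fin p × Fin d × Fin d => |h 0 q.1 q.2.1 q.2.2|
  exact ⟨max ‖b 0‖ (max Kσ Kh), hL, hb, hσ, hh, le_max_left _ _,
    fun k i => (hKσ (k, i)).trans ((le_max_left _ _).trans (le_max_right _ _)),
    fun k i j => (hKh (k, i, j)).trans ((le_max_right _ _).trans (le_max_right _ _))⟩

structure IsAdmissibleControl (T l σup : ℝ) (f' : ℝ → Fin d → ℝ)
    (g' : ℝ → Matrix (Fin d) (Fin d) ℝ) : Prop where
  measurable_f' : ∀ i, Measurable fun s => f' s i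
  intervalIntegrable_sq : IntervalIntegrable (fun s => ‖f' s‖ ^ 2) volume 0 T
  integral_sq_le : ∫ s in (0 : ℝ)..T, ‖f' s‖ ^ 2 ≤ l ^ 2
  measurable_g' : ∀ i j, Measurable fun s => g' s i j
  abs_le : ∀ s ∈ Icc 0 T, ∀ i j, |g' s i j| ≤ σup

variable {T l σup : ℝ} {f' : ℝ → Fin d → ℝ} {g' : ℝ → Matrix (Fin d) (Fin d) ℝ}

namespace IsAdmissibleControl

theorem intervalIntegrable_norm (hc : IsAdmissibleControl T l σup f' g') :
    IntervalIntegrable (fun s => ‖f' s‖) volume 0 T :=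
  ((intervalIntegrable_const (c := (1 : ℝ))).add hc.intervalIntegrable_sq).mono_fun'
    (measurable_pi_iff.2 hc.measurable_f').norm.aestronglyMeasurable
    (Eventually.of_forall fun s => by
      simp only [norm_norm]; nlinarith [sq_nonneg (‖f' s‖ - 1)])

theorem integral_norm_le (hc : IsAdmissibleControl T l σup f' g') (hl : 0 < l) {r t : ℝ}
    (hr : 0 ≤ r) (hrt : r ≤ t) (htT : t ≤ T) : ∫ s in r..t, ‖f' s‖ ≤ l * √(t - r) := by
  have hsub : uIcc r t ⊆ uIcc 0 T :=
    uIcc_subset_uIcc (mem_uIcc_of_le hr (hrt.trans htT)) (mem_uIcc_of_le (hr.trans hrt) htT)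
  exact integral_le_mul_sqrt_of_integral_sq_le hrt hl (hc.intervalIntegrable_norm.mono_set hsub)
    (hc.intervalIntegrable_sq.mono_set hsub)
    ((integral_mono_interval hr hrt htT (Eventually.of_forall fun s => sq_nonneg _)
      hc.intervalIntegrable_sq).trans hc.integral_sq_le)

end IsAdmissibleControl

namespace LipschitzCoeffs

variable {L K : ℝ}

theorem bound_nonneg (hc : LipschitzCoeffs L K b σ h) : 0 ≤ K :=
  (norm_nonneg _).trans hc.norm_b_zero_le

theorem continuous_b (hc : LipschitzCoeffs L K b σ h) : Continuous b :=
  (LipschitzWith.of_dist_le' fun x y => by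
    simpa only [dist_eq_norm] using hc.lipschitz_b x y).continuous

theorem continuous_σ (hc : LipschitzCoeffs L K b σ h) (k : Fin p) (i : Fin d) :
    Continuous fun y => σ y k i :=
  (LipschitzWith.of_dist_le' fun x y => by
    rw [Real.dist_eq, dist_eq_norm]; exact hc.lipschitz_σ x y k i).continuous

theorem continuous_h (hc : LipschitzCoeffs L K b σ h) (k : Fin p) (i j : Fin d) :
    Continuous fun y => h y k i j :=
  (LipschitzWith.of_dist_le' fun x y => by
    rw [Real.dist_eq, dist_eq_norm]; exact hc.lipschitz_h x y k i j).continuous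

theorem norm_ctrlField_le (hc : LipschitzCoeffs L K b σ h) {M : ℝ} {y : Fin p → ℝ}
    {v : Fin d → ℝ} {A : Matrix (Fin d) (Fin d) ℝ} (hσup : 0 ≤ σup) (hy : ‖y‖ ≤ M)
    (hA : ∀ i j, |A i j| ≤ σup) :
    ‖ctrlField b σ h y v A‖ ≤ (K + L * M) * (1 + d ^ 2 * σup + d * ‖v‖) := by
  have hb : ‖b y‖ ≤ K + L * M :=
    norm_le_add_mul_of_norm_sub_le hc.nonneg (hc.lipschitz_b y 0) hc.norm_b_zero_le hy
  have hσ (k i) : |σ y k i| ≤ K + L * M :=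
    norm_le_add_mul_of_norm_sub_le (φ := fun y => σ y k i) hc.nonneg (hc.lipschitz_σ y 0 k i)
      (hc.abs_σ_zero_le k i) hy
  have hh (k i j) : |h y k i j| ≤ K + L * M :=
    norm_le_add_mul_of_norm_sub_le (φ := fun y => h y k i j) hc.nonneg
      (hc.lipschitz_h y 0 k i j) (hc.abs_h_zero_le k i j) hy
  have hKM : 0 ≤ K + L * M := (norm_nonneg _).trans hb
  refine (pi_norm_le_iff_of_nonneg (by positivity)).2 fun k => ?_
  have hbk : |b y k| ≤ K + L * M := (norm_le_pi_norm (b y) k).trans hb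
  have hσv : |∑ i, σ y k i * v i| ≤ d * ((K + L * M) * ‖v‖) := by
    simpa using abs_sum_mul_le_card_mul hKM (hσ k) fun i => norm_le_pi_norm v i
  have hhA : |∑ i, ∑ j, h y k i j * A i j| ≤ d ^ 2 * ((K + L * M) * σup) := by
    rw [← Fintype.sum_prod_type']
    simpa [sq] using abs_sum_mul_le_card_mul (x := fun q : Fin d × Fin d => A q.1 q.2) hKM
      (fun q => hh k q.1 q.2) fun q => hA q.1 q.2
  rw [ctrlField_apply, Real.norm_eq_abs]
  calc _ ≤ |b y k| + |∑ i, σ y k i * v i| + |∑ i, ∑ j, h y k i j * A i j| := abs_add_three _ _ _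
    _ ≤ (K + L * M) + d * ((K + L * M) * ‖v‖) + d ^ 2 * ((K + L * M) * σup) := by gcongr
    _ = (K + L * M) * (1 + d ^ 2 * σup + d * ‖v‖) := by ring

theorem intervalIntegrable_ctrlField (hc : LipschitzCoeffs L K b σ h)
    (hf : IsAdmissibleControl T l σup f' g') (hT : 0 ≤ T) (hσup : 0 ≤ σup)
    {Y : ℝ → Fin p → ℝ} (hY : ContinuousOn Y (Icc 0 T)) :
    IntervalIntegrable (fun s => ctrlField b σ h (Y s) (f' s) (g' s)) volume 0 T := by
  obtain ⟨M, hM⟩ := isCompact_Icc.exists_bound_of_continuousOn hY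
  have hYm : AEMeasurable Y (volume.restrict (uIoc 0 T)) := by
    rw [uIoc_of_le hT]
    exact (hY.mono Ioc_subset_Icc_self).aemeasurable measurableSet_Ioc
  have hmeas : AEStronglyMeasurable (fun s => ctrlField b σ h (Y s) (f' s) (g' s))
      (volume.restrict (uIoc 0 T)) := by
    refine (aemeasurable_pi_lambda _ fun k => ?_).aestronglyMeasurable
    simp only [ctrlField_apply]
    have := hc.continuous_b
    have := hc.continuous_σ
    have := hc.continuous_h
    have := hf.measurable_f'
    have := hf.measurable_g'
    fun_prop
  refine (((intervalIntegrable_const (c := 1 + (d : ℝ) ^ 2 * σup)).add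
    (hf.intervalIntegrable_norm.const_mul d)).const_mul (K + L * M)).mono_fun' hmeas
    ((ae_restrict_iff' measurableSet_uIoc).2 (Eventually.of_forall fun s hs => ?_))
  rw [uIoc_of_le hT] at hs
  exact hc.norm_ctrlField_le hσup (hM s (Ioc_subset_Icc_self hs))
    (hf.abs_le s (Ioc_subset_Icc_self hs))

variable {X : (Fin p → ℝ) → ℝ → (Fin p → ℝ)}

theorem norm_sub_le_of_solvesCtrlODE (hc : LipschitzCoeffs L K b σ h)
    (hf : IsAdmissibleControl T l σup f' g') (hX : SolvesCtrlODE p d T b σ h f' g' X)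
    (hl : 0 < l) (hσup : 0 ≤ σup) (x : Fin p → ℝ) {r t M : ℝ} (hr : 0 ≤ r) (hrt : r ≤ t)
    (htT : t ≤ T) (hM : ∀ s ∈ Icc r t, ‖X x s‖ ≤ M) :
    ‖X x t - X x r‖ ≤ (K + L * M) * sqrtModulus (1 + d ^ 2 * σup) (d * l) (t - r) := by
  have hT : 0 ≤ T := hr.trans (hrt.trans htT)
  have hF := hc.intervalIntegrable_ctrlField hf hT hσup (hX.1 x)
  have hsol : ∀ a ∈ Icc 0 T,
      X x a = x + ∫ s in (0 : ℝ)..a, ctrlField b σ h (X x s) (f' s) (g' s) := hX.2 x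
  have hsub : ∀ {a a'}, a ∈ Icc 0 T → a' ∈ Icc 0 T → uIcc a a' ⊆ uIcc 0 T := fun ha ha' =>
    uIcc_subset_uIcc (mem_uIcc_of_le ha.1 ha.2) (mem_uIcc_of_le ha'.1 ha'.2)
  have h0 : (0 : ℝ) ∈ Icc 0 T := ⟨le_rfl, hT⟩
  have hr' : r ∈ Icc 0 T := ⟨hr, hrt.trans htT⟩
  have ht' : t ∈ Icc 0 T := ⟨hr.trans hrt, htT⟩
  rw [hsol t ht', hsol r hr', add_sub_add_left_eq_sub,
    integral_interval_sub_left (hF.mono_set (hsub h0 ht')) (hF.mono_set (hsub h0 hr'))]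
  have hnorm := hf.intervalIntegrable_norm.mono_set (hsub hr' ht')
  calc ‖∫ s in r..t, ctrlField b σ h (X x s) (f' s) (g' s)‖
      ≤ ∫ s in r..t, (K + L * M) * ((1 + d ^ 2 * σup) + d * ‖f' s‖) :=
        norm_integral_le_of_norm_le hrt (Eventually.of_forall fun s hs =>
          hc.norm_ctrlField_le hσup (hM s (Ioc_subset_Icc_self hs))
            (hf.abs_le s ⟨hr.trans hs.1.le, hs.2.trans htT⟩))
          ((intervalIntegrable_const.add (hnorm.const_mul _)).const_mul _)
    _ = (K + L * M) * ((1 + d ^ 2 * σup) * (t - r) + d * ∫ s in r..t, ‖f' s‖) := by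
        rw [intervalIntegral.integral_const_mul, integral_add intervalIntegrable_const
          (hnorm.const_mul _), intervalIntegral.integral_const, intervalIntegral.integral_const_mul,
          smul_eq_mul, mul_comm (t - r)]
    _ ≤ (K + L * M) * sqrtModulus (1 + d ^ 2 * σup) (d * l) (t - r) := by
        have hM0 : 0 ≤ M := (norm_nonneg _).trans (hM r ⟨le_rfl, hrt⟩)
        have := hc.bound_nonneg
        have := hc.nonneg
        rw [sqrtModulus, mul_assoc (d : ℝ)]
        gcongr
        exact hf.integral_norm_le hl hr hrt htT

theorem exists_bound_of_solvesCtrlODE (hc : LipschitzCoeffs L K b σ h) (hT : 0 ≤ T) (hl : 0 < l)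
    (hσup : 0 ≤ σup) (m : ℝ) :
    ∃ B, ∀ (f' : ℝ → Fin d → ℝ) (g' : ℝ → Matrix (Fin d) (Fin d) ℝ)
      (X : (Fin p → ℝ) → ℝ → (Fin p → ℝ)), IsAdmissibleControl T l σup f' g' →
      SolvesCtrlODE p d T b σ h f' g' X → ∀ x : Fin p → ℝ, ‖x‖ ≤ m →
      ∀ t ∈ Icc 0 T, ‖X x t‖ ≤ B := by
  set α : ℝ := 1 + d ^ 2 * σup
  set β : ℝ := d * l
  have hα : 0 ≤ α := by positivity
  have hβ : 0 ≤ β := by positivity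
  obtain ⟨η, hη, hLη⟩ := exists_pos_mul_sqrtModulus_le L α β
  refine ⟨4 ^ ⌈T / η⌉₊ * (m + K * sqrtModulus α β T), fun f' g' X hf hX x hx => ?_⟩
  have hK := hc.bound_nonneg
  have hKρ : 0 ≤ K * sqrtModulus α β T := by unfold sqrtModulus; positivity
  have hX0 : X x 0 = x := by rw [hX.2 x 0 ⟨le_rfl, hT⟩, integral_same, add_zero]
  refine (hX.1 x).norm.le_four_pow_mul_of_local_doubling hη
    (add_nonneg ((norm_nonneg x).trans hx) hKρ) (by rw [hX0]; linarith)
    (le_add_of_nonneg_left ((norm_nonneg x).trans hx)) fun r t hr hrt htT htr hmax => ?_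
  have hinc := norm_sub_le_of_solvesCtrlODE hc hf hX hl hσup x hr hrt htT hmax
  have hρ := sqrtModulus_mono hα hβ htr
  have hKρ' : K * sqrtModulus α β (t - r) ≤ K * sqrtModulus α β T :=
    mul_le_mul_of_nonneg_left (sqrtModulus_mono hα hβ (by linarith)) hK
  have hLρ : ‖X x t‖ * (L * sqrtModulus α β (t - r)) ≤ ‖X x t‖ * (1 / 2) :=
    mul_le_mul_of_nonneg_left ((mul_le_mul_of_nonneg_left hρ hc.nonneg).trans hLη) (norm_nonneg _)
  have := norm_le_norm_add_norm_sub' (X x t) (X x r)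
  linarith

end LipschitzCoeffs

end ControlledODE

theorem stmt_11_general (p d : ℕ) (T : ℝ) (hT : 0 < T)
    (b : (Fin p → ℝ) → (Fin p → ℝ))
    (σ : (Fin p → ℝ) → Matrix (Fin p) (Fin d) ℝ)
    (h : (Fin p → ℝ) → Fin p → Matrix (Fin d) (Fin d) ℝ)
    (L : ℝ) (hL : 0 ≤ L)
    (hb : ∀ x y, ‖b x - b y‖ ≤ L * ‖x - y‖)
    (hσ : ∀ x y, ∀ k i, |σ x k i - σ y k i| ≤ L * ‖x - y‖)
    (hh : ∀ x y, ∀ k i j, |h x k i j - h y k i j| ≤ L * ‖x - y‖)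
    (S : Set (Matrix (Fin d) (Fin d) ℝ)) (σup : ℝ) (hσup : 0 ≤ σup)
    (hS : ∀ A ∈ S, ∀ i j, |A i j| ≤ σup)
    (m l : ℝ) (hl : 0 < l) :
    -- uniform boundedness of Ψ(f,g)(x,t) over ‖f‖_H ≤ l, g ∈ 𝔸, |x| ≤ m, t ∈ [0,T]
    (∃ B : ℝ, ∀ (f' : ℝ → (Fin d → ℝ)) (g' : ℝ → Matrix (Fin d) (Fin d) ℝ)
        (X : (Fin p → ℝ) → ℝ → (Fin p → ℝ)),
      (∀ i, Measurable fun s => f' s i) →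
      IntervalIntegrable (fun s => ‖f' s‖ ^ 2) volume 0 T →
      (∫ s in (0 : ℝ)..T, ‖f' s‖ ^ 2) ≤ l ^ 2 →
      (∀ i j, Measurable fun s => g' s i j) →
      (∀ s ∈ Set.Icc (0 : ℝ) T, g' s ∈ S) →
      SolvesCtrlODE p d T b σ h f' g' X →
      ∀ x : Fin p → ℝ, ‖x‖ ≤ m → ∀ t ∈ Set.Icc (0 : ℝ) T, ‖X x t‖ ≤ B) ∧
    -- uniform 1/√N modulus for the projection π_N
    (∃ C : ℝ, ∀ N : ℕ, 1 ≤ N →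
      ∀ (f' : ℝ → (Fin d → ℝ)) (g' : ℝ → Matrix (Fin d) (Fin d) ℝ)
        (X : (Fin p → ℝ) → ℝ → (Fin p → ℝ)),
      (∀ i, Measurable fun s => f' s i) →
      IntervalIntegrable (fun s => ‖f' s‖ ^ 2) volume 0 T →
      (∫ s in (0 : ℝ)..T, ‖f' s‖ ^ 2) ≤ l ^ 2 →
      (∀ i j, Measurable fun s => g' s i j) →
      (∀ s ∈ Set.Icc (0 : ℝ) T, g' s ∈ S) →
      SolvesCtrlODE p d T b σ h f' g' X →
      ∀ x : Fin p → ℝ, ‖x‖ ≤ m → ∀ t ∈ Set.Icc (0 : ℝ) T,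
        ‖X x (piN T N t) - X x t‖ ≤ C / Real.sqrt N) := by
  obtain ⟨K, hc⟩ := exists_lipschitzCoeffs hL hb hσ hh
  obtain ⟨B, hB⟩ := hc.exists_bound_of_solvesCtrlODE hT.le hl hσup m
  set ρ := sqrtModulus (1 + d ^ 2 * σup) (d * l)
  refine ⟨⟨B, fun f' g' X h1 h2 h3 h4 h5 hX =>
    hB f' g' X ⟨h1, h2, h3, h4, fun s hs => hS _ (h5 s hs)⟩ hX⟩, (K + L * B) * ρ T, ?_⟩
  intro N hN f' g' X h1 h2 h3 h4 h5 hX x hx t ht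
  have hf : IsAdmissibleControl T l σup f' g' := ⟨h1, h2, h3, h4, fun s hs => hS _ (h5 s hs)⟩
  have hN0 : N ≠ 0 := by omega
  have hKB : 0 ≤ K + L * B := add_nonneg hc.bound_nonneg
    (mul_nonneg hL ((norm_nonneg _).trans (hB f' g' X hf hX x hx t ht)))
  have hα : (0 : ℝ) ≤ 1 + d ^ 2 * σup := by positivity
  have hπ : 0 ≤ piN T N t := piN_nonneg hT.le ht.1
  rw [norm_sub_rev, mul_div_assoc]
  calc ‖X x t - X x (piN T N t)‖
      ≤ (K + L * B) * ρ (t - piN T N t) :=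
        hc.norm_sub_le_of_solvesCtrlODE hf hX hl hσup x hπ (piN_le hT hN0) ht.2
          fun s hs => hB f' g' X hf hX x hx s ⟨hπ.trans hs.1, hs.2.trans ht.2⟩
    _ ≤ (K + L * B) * ρ (T / N) := by
        gcongr
        exact sqrtModulus_mono hα (by positivity) (sub_piN_le hT hN0)
    _ ≤ (K + L * B) * (ρ T / √N) := by
        gcongr
        exact sqrtModulus_div_le hα hT.le (by exact_mod_cast hN)

theorem stmt_11 (p d : ℕ) (T : ℝ) (hT : 0 < T)
    (b : (Fin p → ℝ) → (Fin p → ℝ))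
    (σ : (Fin p → ℝ) → Matrix (Fin p) (Fin d) ℝ)
    (h : (Fin p → ℝ) → Fin p → Matrix (Fin d) (Fin d) ℝ)
    (L : ℝ) (hL : 0 ≤ L)
    (hb : ∀ x y, ‖b x - b y‖ ≤ L * ‖x - y‖)
    (hσ : ∀ x y, ∀ k i, |σ x k i - σ y k i| ≤ L * ‖x - y‖)
    (hh : ∀ x y, ∀ k i j, |h x k i j - h y k i j| ≤ L * ‖x - y‖)
    (S : Set (Matrix (Fin d) (Fin d) ℝ)) (σup : ℝ) (hσup : 0 ≤ σup)
    (hS : ∀ A ∈ S, ∀ i j, |A i j| ≤ σup)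
    (m l : ℝ) (hm : 1 ≤ m) (hl : 0 < l) :
    -- uniform boundedness of Ψ(f,g)(x,t) over ‖f‖_H ≤ l, g ∈ 𝔸, |x| ≤ m, t ∈ [0,T]
    (∃ B : ℝ, ∀ (f' : ℝ → (Fin d → ℝ)) (g' : ℝ → Matrix (Fin d) (Fin d) ℝ)
        (X : (Fin p → ℝ) → ℝ → (Fin p → ℝ)),
      (∀ i, Measurable fun s => f' s i) →
      IntervalIntegrable (fun s => ‖f' s‖ ^ 2) volume 0 T →
      (∫ s in (0 : ℝ)..T, ‖f' s‖ ^ 2) ≤ l ^ 2 →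
      (∀ i j, Measurable fun s => g' s i j) →
      (∀ s ∈ Set.Icc (0 : ℝ) T, g' s ∈ S) →
      SolvesCtrlODE p d T b σ h f' g' X →
      ∀ x : Fin p → ℝ, ‖x‖ ≤ m → ∀ t ∈ Set.Icc (0 : ℝ) T, ‖X x t‖ ≤ B) ∧
    -- uniform 1/√N modulus for the projection π_N
    (∃ C : ℝ, ∀ N : ℕ, 1 ≤ N →
      ∀ (f' : ℝ → (Fin d → ℝ)) (g' : ℝ → Matrix (Fin d) (Fin d) ℝ)
        (X : (Fin p → ℝ) → ℝ → (Fin p → ℝ)),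
      (∀ i, Measurable fun s => f' s i) →
      IntervalIntegrable (fun s => ‖f' s‖ ^ 2) volume 0 T →
      (∫ s in (0 : ℝ)..T, ‖f' s‖ ^ 2) ≤ l ^ 2 →
      (∀ i j, Measurable fun s => g' s i j) →
      (∀ s ∈ Set.Icc (0 : ℝ) T, g' s ∈ S) →
      SolvesCtrlODE p d T b σ h f' g' X →
      ∀ x : Fin p → ℝ, ‖x‖ ≤ m → ∀ t ∈ Set.Icc (0 : ℝ) T,
        ‖X x (piN T N t) - X x t‖ ≤ C / Real.sqrt N) :=
  stmt_11_general p d T hT b σ h L hL hb hσ hh S σup hσup hS m l hl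
end

section
/- For every l > 0, the map (f,g) ↦ Ψ^{(N)}(f,g) is continuous from ({f ∈ H : ‖f‖_H ≤ l} × 𝔸, with metric ρ_{HG}((f₁,g₁),(f₂,g₂)) = ‖f₁−f₂‖_∞ + ‖g₁−g₂‖_∞) into C(ℝ^p × [0,T], ℝ^p) with the topology of uniform convergence on compacts, where Ψ^{(N)} is the N-step Euler scheme defined recursively by Ψ^{(N)}(f,g)(x,t) = x + ∑_{k=1}^N b(Ψ^{(N)}(f,g)(x,(k−1)T/N))(kT/N ∧ t − (k−1)T/N ∧ t) + ∑_{k=1}^N σ(Ψ^{(N)}(f,g)(x,(k−1)T/N))(f(kT/N ∧ t) − f((k−1)T/N ∧ t)) + ∑_{k=1}^N h(Ψ^{(N)}(f,g)(x,(k−1)T/N))(g(kT/N ∧ t) − g((k−1)T/N ∧ t)). -/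
/-!
The values of the scheme at the grid points `kT/N` are produced one after the other, each by
a fixed continuous map `eulerStep` applied to the previous state and to the increments of time
and of the drivers over one grid interval; at a general time `t` the last interval is simply
clipped at `t`. Uniform convergence survives composition with a continuous map as long as the
limit stays in a bounded part of a finite-dimensional space (Heine–Cantor), so an induction
along the grid gives uniform convergence in `x` on compact sets, first at the grid points and
then on `K × [0, T]`. The limits stay bounded because `x ↦ X x (kT/N)` is continuous and the
Cameron–Martin paths `f`, `g` are continuous on `[0, T]`.
-/

open MeasureTheory intervalIntegral

/-- `X = Ψ^{(N)}(f,g)` is the `N`-step Euler scheme driven by the paths `f` and `g`. -/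
def IsEulerScheme (p d : ℕ) (T : ℝ) (N : ℕ)
    (b : (Fin p → ℝ) → (Fin p → ℝ))
    (σ : (Fin p → ℝ) → Matrix (Fin p) (Fin d) ℝ)
    (h : (Fin p → ℝ) → Fin p → Matrix (Fin d) (Fin d) ℝ)
    (f : ℝ → (Fin d → ℝ)) (g : ℝ → Matrix (Fin d) (Fin d) ℝ)
    (X : (Fin p → ℝ) → ℝ → (Fin p → ℝ)) : Prop :=
  ∀ x t,
    X x t = x + ∑ k ∈ Finset.range N,
      ((min (((k : ℝ) + 1) * T / N) t - min ((k : ℝ) * T / N) t) •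
          b (X x ((k : ℝ) * T / N))
        + (σ (X x ((k : ℝ) * T / N))).mulVec
            (f (min (((k : ℝ) + 1) * T / N) t) - f (min ((k : ℝ) * T / N) t))
        + fun j => ∑ a, ∑ c, h (X x ((k : ℝ) * T / N)) j a c *
            (g (min (((k : ℝ) + 1) * T / N) t) a c - g (min ((k : ℝ) * T / N) t) a c))

open Filter Set Bornology

section UniformConvergence

variable {ι α β γ : Type*} {l : Filter ι} {s : Set α}

lemma tendstoUniformlyOn_const [UniformSpace β] (f : α → β) :
    TendstoUniformlyOn (fun _ : ι => f) f l s :=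
  fun _ hu => Eventually.of_forall fun _ _ _ => refl_mem_uniformity hu

lemma TendstoUniformlyOn.prodMk_diag [UniformSpace β] [UniformSpace γ] {F : ι → α → β}
    {f : α → β} {G : ι → α → γ} {g : α → γ} (hF : TendstoUniformlyOn F f l s)
    (hG : TendstoUniformlyOn G g l s) :
    TendstoUniformlyOn (fun i a => (F i a, G i a)) (fun a => (f a, g a)) l s :=
  fun u hu => (hF.prodMk hG u hu).diag_of_prod

lemma TendstoUniformlyOn.finsetSum {κ : Type*} [UniformSpace β] [AddCommGroup β]
    [IsUniformAddGroup β] {F : κ → ι → α → β} {f : κ → α → β} (t : Finset κ)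
    (h : ∀ k ∈ t, TendstoUniformlyOn (F k) (f k) l s) :
    TendstoUniformlyOn (fun i a => ∑ k ∈ t, F k i a) (fun a => ∑ k ∈ t, f k a) l s := by
  classical
  induction t using Finset.induction_on with
  | empty => simpa using tendstoUniformlyOn_const (fun _ : α => (0 : β))
  | insert k t hk ih =>
    simp only [Finset.sum_insert hk]
    exact (h k (Finset.mem_insert_self k t)).fun_add
      (ih fun j hj => h j (Finset.mem_insert_of_mem hj))

/-- Heine–Cantor: `φ` is uniformly continuous on a compact neighbourhood of the bounded set
`f '' s`, which eventually contains all the `F i '' s`. -/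
lemma TendstoUniformlyOn.continuous_comp_of_isBounded [PseudoMetricSpace β] [ProperSpace β]
    [UniformSpace γ] {φ : β → γ} (hφ : Continuous φ) {F : ι → α → β} {f : α → β}
    (hF : TendstoUniformlyOn F f l s) (hb : IsBounded (f '' s)) :
    TendstoUniformlyOn (fun i a => φ (F i a)) (fun a => φ (f a)) l s := by
  rcases s.eq_empty_or_nonempty with rfl | ⟨a₀, -⟩
  · simp [TendstoUniformlyOn]
  obtain ⟨r, hr⟩ := hb.subset_closedBall (f a₀)
  have hfK : ∀ a ∈ s, f a ∈ Metric.closedBall (f a₀) (r + 1) :=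
    fun a ha => Metric.closedBall_subset_closedBall (by linarith) (hr (mem_image_of_mem f ha))
  have hFK : ∀ᶠ i in l, ∀ a ∈ s, F i a ∈ Metric.closedBall (f a₀) (r + 1) := by
    filter_upwards [Metric.tendstoUniformlyOn_iff.1 hF 1 one_pos] with i hi a ha
    calc dist (F i a) (f a₀) ≤ dist (F i a) (f a) + dist (f a) (f a₀) := dist_triangle _ _ _
      _ ≤ 1 + r := add_le_add (dist_comm (f a) _ ▸ (hi a ha).le) (hr (mem_image_of_mem f ha))
      _ = r + 1 := add_comm _ _
  exact UniformContinuousOn.comp_tendstoUniformlyOn_eventually hFK hfK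
    ((isCompact_closedBall _ _).uniformContinuousOn_of_continuous hφ.continuousOn) hF

lemma Metric.tendstoUniformlyOn_atTop_iff_le [PseudoMetricSpace β] [Preorder ι]
    [IsDirectedOrder ι] [Nonempty ι] {F : ι → α → β} {f : α → β} :
    TendstoUniformlyOn F f atTop s ↔
      ∀ ε > 0, ∃ i₀, ∀ i ≥ i₀, ∀ a ∈ s, dist (F i a) (f a) ≤ ε := by
  rw [Metric.tendstoUniformlyOn_iff]
  constructor
  · intro h ε hε
    obtain ⟨i₀, hi₀⟩ := eventually_atTop.1 (h ε hε)
    exact ⟨i₀, fun i hi a ha => dist_comm (f a) (F i a) ▸ (hi₀ i hi a ha).le⟩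
  · intro h ε hε
    obtain ⟨i₀, hi₀⟩ := h (ε / 2) (half_pos hε)
    refine eventually_atTop.2 ⟨i₀, fun i hi a ha => ?_⟩
    rw [dist_comm]
    linarith [hi₀ i hi a ha]

end UniformConvergence

section Primitive

variable {T : ℝ} {d : ℕ}

lemma IntervalIntegrable.of_sq_norm {E : Type*} [NormedAddCommGroup E] {F : ℝ → E} {a b : ℝ}
    (hF : AEStronglyMeasurable F) (h : IntervalIntegrable (fun s => ‖F s‖ ^ 2) volume a b) :
    IntervalIntegrable F volume a b := by
  rw [intervalIntegrable_iff] at h ⊢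
  have : IsFiniteMeasure (volume.restrict (uIoc a b)) :=
    isFiniteMeasure_restrict.2 measure_Ioc_lt_top.ne
  exact ((memLp_two_iff_integrable_sq_norm hF.restrict).2 h).integrable one_le_two

lemma continuousOn_Icc_of_eq_primitive {F F' : ℝ → ℝ} (hT : 0 ≤ T)
    (hF' : IntervalIntegrable F' volume 0 T) (hF : ∀ t ∈ Icc 0 T, F t = ∫ s in (0 : ℝ)..t, F' s) :
    ContinuousOn F (Icc 0 T) := by
  have := continuousOn_primitive_interval' hF' left_mem_uIcc
  rw [uIcc_of_le hT] at this
  exact this.congr hF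

lemma continuousOn_Icc_of_eq_primitive_of_sq_integrable {f f' : ℝ → Fin d → ℝ} (hT : 0 ≤ T)
    (hmeas : ∀ i, Measurable fun s => f' s i)
    (hint : IntervalIntegrable (fun s => ‖f' s‖ ^ 2) volume 0 T)
    (hf : ∀ t ∈ Icc 0 T, ∀ i, f t i = ∫ s in (0 : ℝ)..t, f' s i) :
    ContinuousOn f (Icc 0 T) := by
  have hf' := IntervalIntegrable.of_sq_norm (measurable_pi_iff.2 hmeas).aestronglyMeasurable hint
  refine continuousOn_pi.2 fun i => continuousOn_Icc_of_eq_primitive hT ?_ fun t ht => hf t ht i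
  exact hf'.mono_fun (hmeas i).aestronglyMeasurable
    (Eventually.of_forall fun s => norm_le_pi_norm (f' s) i)

lemma continuousOn_Icc_of_eq_primitive_of_bounded {g g' : ℝ → Matrix (Fin d) (Fin d) ℝ} {C : ℝ}
    (hT : 0 ≤ T) (hmeas : ∀ i j, Measurable fun s => g' s i j)
    (hbound : ∀ s ∈ Icc 0 T, ∀ i j, |g' s i j| ≤ C)
    (hg : ∀ t ∈ Icc 0 T, ∀ i j, g t i j = ∫ s in (0 : ℝ)..t, g' s i j) :
    ContinuousOn (fun t i j => g t i j) (Icc 0 T) := by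
  refine continuousOn_pi.2 fun i => continuousOn_pi.2 fun j =>
    continuousOn_Icc_of_eq_primitive hT ?_ fun t ht => hg t ht i j
  refine (intervalIntegrable_const (c := C)).mono_fun' (hmeas i j).aestronglyMeasurable
    (ae_restrict_of_forall_mem measurableSet_uIoc fun s hs => ?_)
  rw [uIoc_of_le hT] at hs
  exact hbound s (Ioc_subset_Icc_self hs) i j

end Primitive

section EulerScheme

variable {p d : ℕ} {b : (Fin p → ℝ) → (Fin p → ℝ)} {σ : (Fin p → ℝ) → Matrix (Fin p) (Fin d) ℝ}
  {h : (Fin p → ℝ) → Fin p → Matrix (Fin d) (Fin d) ℝ}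

variable (b σ h) in
/-- One step of the scheme, as a function of the current state `z`, the time increment `τ`
and the increments `Δf`, `Δg` of the two driving paths, packed as `(z, τ, Δf, Δg)`. -/
def eulerStep (w : (Fin p → ℝ) × ℝ × (Fin d → ℝ) × (Fin d → Fin d → ℝ)) : Fin p → ℝ :=
  w.2.1 • b w.1 + (σ w.1).mulVec w.2.2.1 + fun j => ∑ a, ∑ c, h w.1 j a c * w.2.2.2 a c

lemma continuous_eulerStep (hb : Continuous b) (hσ : ∀ j i, Continuous fun z => σ z j i)
    (hh : ∀ j a c, Continuous fun z => h z j a c) : Continuous (eulerStep b σ h) := by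
  refine continuous_pi fun j => ?_
  simp only [eulerStep, Pi.add_apply, Pi.smul_apply, smul_eq_mul, Matrix.mulVec, dotProduct]
  fun_prop

lemma eulerStep_zero (z : Fin p → ℝ) : eulerStep b σ h (z, 0, 0, 0) = 0 := by
  ext j
  simp [eulerStep]

variable (T : ℝ) (N : ℕ)

/-- The argument of `eulerStep` in the `k`-th summand of `IsEulerScheme` at `q = (x, t)`. -/
noncomputable def eulerStepData (k : ℕ) (F : ℝ → Fin d → ℝ) (G : ℝ → Fin d → Fin d → ℝ)
    (Y : (Fin p → ℝ) → ℝ → Fin p → ℝ) (q : (Fin p → ℝ) × ℝ) :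
    (Fin p → ℝ) × ℝ × (Fin d → ℝ) × (Fin d → Fin d → ℝ) :=
  (Y q.1 ((k : ℝ) * T / N),
    min (((k : ℝ) + 1) * T / N) q.2 - min ((k : ℝ) * T / N) q.2,
    F (min (((k : ℝ) + 1) * T / N) q.2) - F (min ((k : ℝ) * T / N) q.2),
    G (min (((k : ℝ) + 1) * T / N) q.2) - G (min ((k : ℝ) * T / N) q.2))

variable {T N}

lemma isEulerScheme_iff {f : ℝ → Fin d → ℝ} {g : ℝ → Fin d → Fin d → ℝ}
    {X : (Fin p → ℝ) → ℝ → Fin p → ℝ} :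
    IsEulerScheme p d T N b σ h f (fun t => Matrix.of (g t)) X ↔
      ∀ x t, X x t = x + ∑ k ∈ Finset.range N, eulerStep b σ h (eulerStepData T N k f g X (x, t)) :=
  Iff.rfl

lemma natCast_mul_div_mono (hT : 0 ≤ T) {j k : ℕ} (hjk : j ≤ k) :
    (j : ℝ) * T / N ≤ (k : ℝ) * T / N := by
  gcongr

lemma natCast_mul_div_le (hT : 0 ≤ T) {k : ℕ} (hk : k ≤ N) : (k : ℝ) * T / N ≤ T := by
  rcases N.eq_zero_or_pos with rfl | hN
  · simpa using hT
  rw [div_le_iff₀ (by positivity), mul_comm T]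
  gcongr

lemma eulerStep_eulerStepData_of_le (hT : 0 ≤ T) {k : ℕ} {F : ℝ → Fin d → ℝ}
    {G : ℝ → Fin d → Fin d → ℝ} {Y : (Fin p → ℝ) → ℝ → Fin p → ℝ} {x : Fin p → ℝ} {t : ℝ}
    (ht : t ≤ (k : ℝ) * T / N) : eulerStep b σ h (eulerStepData T N k F G Y (x, t)) = 0 := by
  have ht' : t ≤ ((k : ℝ) + 1) * T / N := ht.trans (by gcongr; linarith)
  simp only [eulerStepData, min_eq_right ht, min_eq_right ht', sub_self]
  exact eulerStep_zero _

lemma min_mem_Icc_of_mem_Icc {s t : ℝ} (hs : 0 ≤ s) (ht : t ∈ Icc 0 T) :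
    min s t ∈ Icc 0 T :=
  ⟨le_min hs ht.1, (min_le_right _ _).trans ht.2⟩

variable {f : ℝ → Fin d → ℝ} {g : ℝ → Fin d → Fin d → ℝ} {X : (Fin p → ℝ) → ℝ → Fin p → ℝ}
  {fn : ℕ → ℝ → Fin d → ℝ} {gn : ℕ → ℝ → Fin d → Fin d → ℝ}
  {Xn : ℕ → (Fin p → ℝ) → ℝ → Fin p → ℝ}
  {K : Set (Fin p → ℝ)} {D : Set ((Fin p → ℝ) × ℝ)}

lemma continuous_eulerScheme_grid (hT : 0 ≤ T) (hφ : Continuous (eulerStep b σ h))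
    (hX : IsEulerScheme p d T N b σ h f (fun t => Matrix.of (g t)) X) (k : ℕ) :
    Continuous fun x => X x ((k : ℝ) * T / N) := by
  induction k using Nat.strong_induction_on with
  | _ k ih =>
  simp_rw [isEulerScheme_iff.1 hX _ ((k : ℝ) * T / N)]
  refine continuous_id.add (continuous_finsetSum _ fun j _ => ?_)
  rcases lt_or_ge j k with hjk | hkj
  · dsimp only [eulerStepData]
    exact hφ.comp ((ih j hjk).prodMk continuous_const)
  · simp_rw [eulerStep_eulerStepData_of_le hT (natCast_mul_div_mono hT hkj)]
    exact continuous_const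

lemma tendstoUniformlyOn_eulerStepData (hT : 0 ≤ T) {j : ℕ} (hD : D ⊆ K ×ˢ Icc 0 T)
    (hX : TendstoUniformlyOn (fun n x => Xn n x ((j : ℝ) * T / N))
      (fun x => X x ((j : ℝ) * T / N)) atTop K)
    (hf : TendstoUniformlyOn fn f atTop (Icc 0 T)) (hg : TendstoUniformlyOn gn g atTop (Icc 0 T)) :
    TendstoUniformlyOn (fun n => eulerStepData T N j (fn n) (gn n) (Xn n))
      (eulerStepData T N j f g X) atTop D := by
  have hclip : ∀ s : ℝ, 0 ≤ s → MapsTo (fun q : (Fin p → ℝ) × ℝ => min s q.2) D (Icc 0 T) :=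
    fun s hs q hq => min_mem_Icc_of_mem_Icc hs (hD hq).2
  have hdrive : ∀ {V : Type} [NormedAddCommGroup V] {F : ℝ → V} {Fn : ℕ → ℝ → V},
      TendstoUniformlyOn Fn F atTop (Icc 0 T) →
      TendstoUniformlyOn (fun n (q : (Fin p → ℝ) × ℝ) =>
          Fn n (min (((j : ℝ) + 1) * T / N) q.2) - Fn n (min ((j : ℝ) * T / N) q.2))
        (fun q => F (min (((j : ℝ) + 1) * T / N) q.2) - F (min ((j : ℝ) * T / N) q.2)) atTop D :=
    fun hF => ((hF.comp _).mono (hclip _ (by positivity))).fun_sub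
      ((hF.comp _).mono (hclip _ (by positivity)))
  exact ((hX.comp Prod.fst).mono fun q hq => (hD hq).1).prodMk_diag
    ((tendstoUniformlyOn_const _).prodMk_diag ((hdrive hf).prodMk_diag (hdrive hg)))

lemma isBounded_image_eulerStepData (hT : 0 ≤ T) {j : ℕ} (hD : D ⊆ K ×ˢ Icc 0 T)
    (hX : IsBounded ((fun x => X x ((j : ℝ) * T / N)) '' K)) (hf : IsBounded (f '' Icc 0 T))
    (hg : IsBounded (g '' Icc 0 T)) : IsBounded (eulerStepData T N j f g X '' D) := by
  refine (hX.prod (((Metric.isBounded_Icc 0 T).sub (Metric.isBounded_Icc 0 T)).prod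
    ((hf.sub hf).prod (hg.sub hg)))).subset ?_
  rintro _ ⟨q, hq, rfl⟩
  have hs := min_mem_Icc_of_mem_Icc (s := ((j : ℝ) + 1) * T / N) (by positivity) (hD hq).2
  have hu := min_mem_Icc_of_mem_Icc (s := (j : ℝ) * T / N) (by positivity) (hD hq).2
  exact ⟨mem_image_of_mem _ (hD hq).1, sub_mem_sub hs hu,
    sub_mem_sub (mem_image_of_mem f hs) (mem_image_of_mem f hu),
    sub_mem_sub (mem_image_of_mem g hs) (mem_image_of_mem g hu)⟩

/-- Grid points that no `t` with `(x, t) ∈ D` reaches contribute nothing on `D`. -/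
theorem tendstoUniformlyOn_eulerScheme (hT : 0 ≤ T) (hφ : Continuous (eulerStep b σ h))
    (hK : IsCompact K) (hfc : ContinuousOn f (Icc 0 T)) (hgc : ContinuousOn g (Icc 0 T))
    (hf : TendstoUniformlyOn fn f atTop (Icc 0 T)) (hg : TendstoUniformlyOn gn g atTop (Icc 0 T))
    (hX : IsEulerScheme p d T N b σ h f (fun t => Matrix.of (g t)) X)
    (hXn : ∀ n, IsEulerScheme p d T N b σ h (fn n) (fun t => Matrix.of (gn n t)) (Xn n))
    (hD : D ⊆ K ×ˢ Icc 0 T)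
    (hgrid : ∀ j < N, TendstoUniformlyOn (fun n x => Xn n x ((j : ℝ) * T / N))
      (fun x => X x ((j : ℝ) * T / N)) atTop K ∨ ∀ q ∈ D, q.2 ≤ (j : ℝ) * T / N) :
    TendstoUniformlyOn (fun n q => Xn n q.1 q.2) (fun q => X q.1 q.2) atTop D := by
  have hstep : ∀ j ∈ Finset.range N,
      TendstoUniformlyOn (fun n q => eulerStep b σ h (eulerStepData T N j (fn n) (gn n) (Xn n) q))
        (fun q => eulerStep b σ h (eulerStepData T N j f g X q)) atTop D := by
    intro j hj
    rcases hgrid j (Finset.mem_range.1 hj) with hconv | hle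
    · have hXb := (hK.image (continuous_eulerScheme_grid hT hφ hX j)).isBounded
      exact (tendstoUniformlyOn_eulerStepData hT hD hconv hf hg).continuous_comp_of_isBounded hφ
        (isBounded_image_eulerStepData hT hD hXb
          (isCompact_Icc.image_of_continuousOn hfc).isBounded
          (isCompact_Icc.image_of_continuousOn hgc).isBounded)
    · refine ((tendstoUniformlyOn_const fun _ => 0).congr
        (Eventually.of_forall fun n q hq => ?_)).congr_right fun q hq => ?_
      all_goals exact (eulerStep_eulerStepData_of_le hT (hle q hq)).symm
  refine (((tendstoUniformlyOn_const Prod.fst).fun_add (TendstoUniformlyOn.finsetSum _ hstep)).congr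
    (Eventually.of_forall fun n q _ => ?_)).congr_right fun q _ => ?_
  · exact (isEulerScheme_iff.1 (hXn n) q.1 q.2).symm
  · exact (isEulerScheme_iff.1 hX q.1 q.2).symm

theorem tendstoUniformlyOn_eulerScheme_grid (hT : 0 ≤ T) (hφ : Continuous (eulerStep b σ h))
    (hK : IsCompact K) (hfc : ContinuousOn f (Icc 0 T)) (hgc : ContinuousOn g (Icc 0 T))
    (hf : TendstoUniformlyOn fn f atTop (Icc 0 T)) (hg : TendstoUniformlyOn gn g atTop (Icc 0 T))
    (hX : IsEulerScheme p d T N b σ h f (fun t => Matrix.of (g t)) X)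
    (hXn : ∀ n, IsEulerScheme p d T N b σ h (fn n) (fun t => Matrix.of (gn n t)) (Xn n))
    {k : ℕ} (hk : k ≤ N) :
    TendstoUniformlyOn (fun n x => Xn n x ((k : ℝ) * T / N)) (fun x => X x ((k : ℝ) * T / N))
      atTop K := by
  induction k using Nat.strong_induction_on with
  | _ k ih =>
  have hD : K ×ˢ {(k : ℝ) * T / N} ⊆ K ×ˢ Icc 0 T :=
    prod_mono subset_rfl (singleton_subset_iff.2 ⟨by positivity, natCast_mul_div_le hT hk⟩)
  refine ((tendstoUniformlyOn_eulerScheme hT hφ hK hfc hgc hf hg hX hXn hD fun j _ => ?_).comp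
    fun x => (x, (k : ℝ) * T / N)).mono fun x hx => ⟨hx, rfl⟩
  rcases lt_or_ge j k with hjk | hkj
  · exact Or.inl (ih j hjk (hjk.le.trans hk))
  · exact Or.inr fun q hq => (mem_singleton_iff.1 hq.2).le.trans (natCast_mul_div_mono hT hkj)

end EulerScheme

theorem stmt_13_general (p d : ℕ) (T : ℝ) (hT : 0 < T) (N : ℕ)
    (b : (Fin p → ℝ) → (Fin p → ℝ))
    (σ : (Fin p → ℝ) → Matrix (Fin p) (Fin d) ℝ)
    (h : (Fin p → ℝ) → Fin p → Matrix (Fin d) (Fin d) ℝ)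
    (L : ℝ)
    (hb : ∀ x y, ‖b x - b y‖ ≤ L * ‖x - y‖)
    (hσ : ∀ x y, ∀ k i, |σ x k i - σ y k i| ≤ L * ‖x - y‖)
    (hh : ∀ x y, ∀ k i j, |h x k i j - h y k i j| ≤ L * ‖x - y‖)
    (S : Set (Matrix (Fin d) (Fin d) ℝ)) (σup : ℝ)
    (hS : ∀ A ∈ S, ∀ i j, |A i j| ≤ σup)
    -- the controls (f_n, g_n) and (f, g) together with their Euler schemes
    (f : ℝ → (Fin d → ℝ)) (f' : ℝ → (Fin d → ℝ))
    (hf'meas : ∀ i, Measurable fun s => f' s i)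
    (hf'int : IntervalIntegrable (fun s => ‖f' s‖ ^ 2) volume 0 T)
    (hfrep : ∀ t ∈ Set.Icc (0 : ℝ) T, ∀ i, f t i = ∫ s in (0 : ℝ)..t, f' s i)
    (g : ℝ → Matrix (Fin d) (Fin d) ℝ) (g' : ℝ → Matrix (Fin d) (Fin d) ℝ)
    (hg'meas : ∀ i j, Measurable fun s => g' s i j)
    (hg'S : ∀ s ∈ Set.Icc (0 : ℝ) T, g' s ∈ S)
    (hgrep : ∀ t ∈ Set.Icc (0 : ℝ) T, ∀ i j, g t i j = ∫ s in (0 : ℝ)..t, g' s i j)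
    (fn : ℕ → ℝ → (Fin d → ℝ))
    (gn : ℕ → ℝ → Matrix (Fin d) (Fin d) ℝ)
    -- convergence in the sup-norm metric ρ_HG on [0,T]
    (hfconv : ∀ ε > (0 : ℝ), ∃ n₀, ∀ n ≥ n₀, ∀ t ∈ Set.Icc (0 : ℝ) T,
      ‖fn n t - f t‖ ≤ ε)
    (hgconv : ∀ ε > (0 : ℝ), ∃ n₀, ∀ n ≥ n₀, ∀ t ∈ Set.Icc (0 : ℝ) T, ∀ i j,
      |gn n t i j - g t i j| ≤ ε)
    (X : (Fin p → ℝ) → ℝ → (Fin p → ℝ))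
    (Xn : ℕ → (Fin p → ℝ) → ℝ → (Fin p → ℝ))
    (hX : IsEulerScheme p d T N b σ h f g X)
    (hXn : ∀ n, IsEulerScheme p d T N b σ h (fn n) (gn n) (Xn n)) :
    -- Ψ^{(N)}(f_n, g_n) → Ψ^{(N)}(f, g) uniformly on compact subsets of ℝ^p × [0,T]
    ∀ ε > (0 : ℝ), ∀ m : ℝ, ∃ n₀, ∀ n ≥ n₀, ∀ x : Fin p → ℝ, ‖x‖ ≤ m →
      ∀ t ∈ Set.Icc (0 : ℝ) T, ‖Xn n x t - X x t‖ ≤ ε := by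
  intro ε hε m
  have hφ : Continuous (eulerStep b σ h) := continuous_eulerStep
    (LipschitzWith.of_dist_le' fun x y => by simpa only [dist_eq_norm] using hb x y).continuous
    (fun j i => (LipschitzWith.of_dist_le' fun x y => by
      simpa only [dist_eq_norm, Real.norm_eq_abs] using hσ x y j i).continuous)
    (fun j a c => (LipschitzWith.of_dist_le' fun x y => by
      simpa only [dist_eq_norm, Real.norm_eq_abs] using hh x y j a c).continuous)
  have hf : TendstoUniformlyOn fn f atTop (Icc 0 T) :=
    Metric.tendstoUniformlyOn_atTop_iff_le.2 fun ε hε => (hfconv ε hε).imp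
      fun n₀ hn₀ n hn t ht => (dist_eq_norm _ _).trans_le (hn₀ n hn t ht)
  have hg : TendstoUniformlyOn (fun n t => Matrix.of.symm (gn n t)) (fun t => Matrix.of.symm (g t))
      atTop (Icc 0 T) :=
    Metric.tendstoUniformlyOn_atTop_iff_le.2 fun ε hε => (hgconv ε hε).imp
      fun n₀ hn₀ n hn t ht => (dist_pi_le_iff hε.le).2 fun i => (dist_pi_le_iff hε.le).2
        fun j => (Real.dist_eq _ _).trans_le (hn₀ n hn t ht i j)
  have hfc := continuousOn_Icc_of_eq_primitive_of_sq_integrable hT.le hf'meas hf'int hfrep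
  have hgc := continuousOn_Icc_of_eq_primitive_of_bounded hT.le hg'meas
    (fun s hs => hS _ (hg'S s hs)) hgrep
  have hK := isCompact_closedBall (0 : Fin p → ℝ) m
  have hconv := tendstoUniformlyOn_eulerScheme hT.le hφ hK hfc hgc hf hg hX hXn subset_rfl
    fun j hj => Or.inl (tendstoUniformlyOn_eulerScheme_grid hT.le hφ hK hfc hgc hf hg hX hXn hj.le)
  obtain ⟨n₀, hn₀⟩ := Metric.tendstoUniformlyOn_atTop_iff_le.1 hconv ε hε
  exact ⟨n₀, fun n hn x hx t ht => by
    simpa only [dist_eq_norm] using hn₀ n hn (x, t) ⟨mem_closedBall_zero_iff.2 hx, ht⟩⟩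

theorem stmt_13 (p d : ℕ) (T : ℝ) (hT : 0 < T) (N : ℕ) (hN : 1 ≤ N)
    (b : (Fin p → ℝ) → (Fin p → ℝ))
    (σ : (Fin p → ℝ) → Matrix (Fin p) (Fin d) ℝ)
    (h : (Fin p → ℝ) → Fin p → Matrix (Fin d) (Fin d) ℝ)
    (L : ℝ) (hL : 0 ≤ L)
    (hb : ∀ x y, ‖b x - b y‖ ≤ L * ‖x - y‖)
    (hσ : ∀ x y, ∀ k i, |σ x k i - σ y k i| ≤ L * ‖x - y‖)
    (hh : ∀ x y, ∀ k i j, |h x k i j - h y k i j| ≤ L * ‖x - y‖)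
    (S : Set (Matrix (Fin d) (Fin d) ℝ)) (σup : ℝ) (hσup : 0 ≤ σup)
    (hS : ∀ A ∈ S, ∀ i j, |A i j| ≤ σup)
    (l : ℝ) (hl : 0 < l)
    -- the controls (f_n, g_n) and (f, g) together with their Euler schemes
    (f : ℝ → (Fin d → ℝ)) (f' : ℝ → (Fin d → ℝ))
    (hf'meas : ∀ i, Measurable fun s => f' s i)
    (hf'int : IntervalIntegrable (fun s => ‖f' s‖ ^ 2) volume 0 T)
    (hfH : (∫ s in (0 : ℝ)..T, ‖f' s‖ ^ 2) ≤ l ^ 2)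
    (hfrep : ∀ t ∈ Set.Icc (0 : ℝ) T, ∀ i, f t i = ∫ s in (0 : ℝ)..t, f' s i)
    (g : ℝ → Matrix (Fin d) (Fin d) ℝ) (g' : ℝ → Matrix (Fin d) (Fin d) ℝ)
    (hg'meas : ∀ i j, Measurable fun s => g' s i j)
    (hg'S : ∀ s ∈ Set.Icc (0 : ℝ) T, g' s ∈ S)
    (hgrep : ∀ t ∈ Set.Icc (0 : ℝ) T, ∀ i j, g t i j = ∫ s in (0 : ℝ)..t, g' s i j)
    (fn : ℕ → ℝ → (Fin d → ℝ)) (fn' : ℕ → ℝ → (Fin d → ℝ))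
    (hfn'meas : ∀ n i, Measurable fun s => fn' n s i)
    (hfn'int : ∀ n, IntervalIntegrable (fun s => ‖fn' n s‖ ^ 2) volume 0 T)
    (hfnH : ∀ n, (∫ s in (0 : ℝ)..T, ‖fn' n s‖ ^ 2) ≤ l ^ 2)
    (hfnrep : ∀ n, ∀ t ∈ Set.Icc (0 : ℝ) T, ∀ i, fn n t i = ∫ s in (0 : ℝ)..t, fn' n s i)
    (gn : ℕ → ℝ → Matrix (Fin d) (Fin d) ℝ) (gn' : ℕ → ℝ → Matrix (Fin d) (Fin d) ℝ)
    (hgn'meas : ∀ n i j, Measurable fun s => gn' n s i j)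
    (hgn'S : ∀ n, ∀ s ∈ Set.Icc (0 : ℝ) T, gn' n s ∈ S)
    (hgnrep : ∀ n, ∀ t ∈ Set.Icc (0 : ℝ) T, ∀ i j,
      gn n t i j = ∫ s in (0 : ℝ)..t, gn' n s i j)
    -- convergence in the sup-norm metric ρ_HG on [0,T]
    (hfconv : ∀ ε > (0 : ℝ), ∃ n₀, ∀ n ≥ n₀, ∀ t ∈ Set.Icc (0 : ℝ) T,
      ‖fn n t - f t‖ ≤ ε)
    (hgconv : ∀ ε > (0 : ℝ), ∃ n₀, ∀ n ≥ n₀, ∀ t ∈ Set.Icc (0 : ℝ) T, ∀ i j,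
      |gn n t i j - g t i j| ≤ ε)
    (X : (Fin p → ℝ) → ℝ → (Fin p → ℝ))
    (Xn : ℕ → (Fin p → ℝ) → ℝ → (Fin p → ℝ))
    (hX : IsEulerScheme p d T N b σ h f g X)
    (hXn : ∀ n, IsEulerScheme p d T N b σ h (fn n) (gn n) (Xn n)) :
    -- Ψ^{(N)}(f_n, g_n) → Ψ^{(N)}(f, g) uniformly on compact subsets of ℝ^p × [0,T]
    ∀ ε > (0 : ℝ), ∀ m : ℝ, ∃ n₀, ∀ n ≥ n₀, ∀ x : Fin p → ℝ, ‖x‖ ≤ m →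
      ∀ t ∈ Set.Icc (0 : ℝ) T, ‖Xn n x t - X x t‖ ≤ ε :=
  stmt_13_general p d T hT N b σ h L hb hσ hh S σup hS f f' hf'meas hf'int hfrep g g' hg'meas hg'S
    hgrep fn gn hfconv hgconv X Xn hX hXn
end
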